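/- The function $\psi_1$ is strictly positive on the open interval $(0,R)$. -/

import Mathlib

open Set

noncomputable section

/-- The radial profile `u_*` of the first Dirichlet eigenfunction of
`-Δ - χ_{B(0,r*)}` on the disc `B(0,R) ⊂ ℝ²`, with derivative `u'` and
eigenvalue `lam`: `u_*` is `C¹` on `[0,R]`, positive on `[0,R)`, satisfies
`-(1/r)(r u')' = (lam + χ_{[0,r*)}) u` on `(0,R)` (away from the interface `r*`),
`u'(0) = 0`, `u(R) = 0`, and `u' < 0` on `(0,R]`. -/
structure EigenProfile (R rs lam : ℝ) (u u' : ℝ → ℝ) : Prop where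
  cont : ContinuousOn u (Icc 0 R)
  deriv : ∀ r ∈ Icc (0 : ℝ) R, HasDerivWithinAt u (u' r) (Icc 0 R) r
  derivCont : ContinuousOn u' (Icc 0 R)
  pos : ∀ r ∈ Ico (0 : ℝ) R, 0 < u r
  ode : ∀ r ∈ Ioo (0 : ℝ) R, r ≠ rs →
    HasDerivAt (fun s => s * u' s)
      (-(r * ((lam + (if r < rs then (1 : ℝ) else 0)) * u r))) r
  deriv0 : u' 0 = 0
  valR : u R = 0
  derivNeg : ∀ r ∈ Ioc (0 : ℝ) R, u' r < 0

/-- The profile `ψ_k`: continuous on `[0,R]`, `C²` on `(0,r*)` and `(r*,R)`,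
satisfying `-(1/r)(r ψ_k')' = (lam + χ_{[0,r*)} - k²/r²) ψ_k` there,
`ψ_k(0) = ψ_k(R) = 0`, and the jump of one-sided derivatives
`ψ_k'(r*⁺) - ψ_k'(r*⁻) = -u(r*)`; `dplus` and `dminus` are the one-sided
derivatives at `r*`. -/
structure PsiProfile (R rs lam : ℝ) (u : ℝ → ℝ) (k : ℕ) (ψ ψ' : ℝ → ℝ)
    (dplus dminus : ℝ) : Prop where
  cont : ContinuousOn ψ (Icc 0 R)
  deriv : ∀ r ∈ Ioo (0 : ℝ) R, r ≠ rs → HasDerivAt ψ (ψ' r) r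
  ode : ∀ r ∈ Ioo (0 : ℝ) R, r ≠ rs →
    HasDerivAt (fun s => s * ψ' s)
      (-(r * ((lam + (if r < rs then (1 : ℝ) else 0) - (k : ℝ) ^ 2 / r ^ 2) * ψ r))) r
  val0 : ψ 0 = 0
  valR : ψ R = 0
  jumpPlus : HasDerivWithinAt ψ dplus (Ioi rs) rs
  jumpMinus : HasDerivWithinAt ψ dminus (Iio rs) rs
  jump : dplus - dminus = -(u rs)

/-!
Differentiating the equation for `u` shows that `v = -u'` solves the equation for `ψ₁` on each
side of `r*`, so the Wronskian `W = r (ψ' v - ψ v')` is constant on `(0, r*)` and on `(r*, R)`,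
and `(ψ / v)' = W / (r v²)`. Near `0` we have `v = O(r)` while `ψ` stays continuous, so `W = 0`
on `(0, r*)` (otherwise `ψ'` would grow like `r⁻²`) and `ψ = α v` there. The jump condition
gives `W = r* u(r*) (ψ(r*) - v(r*))` on `(r*, R)`. This is negative, since otherwise `ψ / v`
would increase on `[r*, R]` from `α ≥ 1` to `ψ(R) / v(R) = 0`. Hence `ψ / v` decreases strictly
to `0` on `[r*, R]`, which gives `α > 0` and `ψ > 0` on `(0, R)`.
-/

open Filter Topology

lemma hasDerivAt_of_hasDerivAt_id_mul {f : ℝ → ℝ} {t d : ℝ} (ht : t ≠ 0)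
    (h : HasDerivAt (fun s => s * f s) d t) : HasDerivAt f ((d - f t) / t) t := by
  have hquot := h.div (hasDerivAt_id t) ht
  refine (hquot.congr_of_eventuallyEq ?_).congr_deriv ?_
  · filter_upwards [eventually_ne_nhds ht] with s hs
    exact (mul_div_cancel_left₀ (f s) hs).symm
  · simp only [id]
    field_simp

lemma exists_const_of_hasDerivAt_zero_Ioo {f : ℝ → ℝ} {a b : ℝ}
    (h : ∀ x ∈ Ioo a b, HasDerivAt f 0 x) : ∃ c, ∀ x ∈ Ioo a b, f x = c :=
  isOpen_Ioo.exists_is_const_of_deriv_eq_zero isPreconnected_Ioo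
    (fun x hx => (h x hx).differentiableAt.differentiableWithinAt) (fun x hx => (h x hx).deriv)

lemma eq_of_hasDerivWithinAt_Iio_of_tendsto_deriv {f f' : ℝ → ℝ} {a d L : ℝ}
    (hd : HasDerivWithinAt f d (Iio a) a) (hf : ContinuousAt f a)
    (hf' : ∀ᶠ x in 𝓝[<] a, HasDerivAt f (f' x) x) (hL : Tendsto f' (𝓝[<] a) (𝓝 L)) :
    d = L := by
  have hderiv : deriv f =ᶠ[𝓝[<] a] f' := hf'.mono fun x hx => hx.deriv
  have hL' := hasDerivWithinAt_Iic_of_tendsto_deriv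
    (fun x hx => hx.differentiableAt.differentiableWithinAt) hf.continuousWithinAt hf'
    (hL.congr' hderiv.symm)
  exact (uniqueDiffWithinAt_Iio a).eq_deriv _ hd (hL'.mono Iio_subset_Iic_self)

lemma eq_of_hasDerivWithinAt_Ioi_of_tendsto_deriv {f f' : ℝ → ℝ} {a d L : ℝ}
    (hd : HasDerivWithinAt f d (Ioi a) a) (hf : ContinuousAt f a)
    (hf' : ∀ᶠ x in 𝓝[>] a, HasDerivAt f (f' x) x) (hL : Tendsto f' (𝓝[>] a) (𝓝 L)) :
    d = L := by
  have hderiv : deriv f =ᶠ[𝓝[>] a] f' := hf'.mono fun x hx => hx.deriv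
  have hL' := hasDerivWithinAt_Ici_of_tendsto_deriv
    (fun x hx => hx.differentiableAt.differentiableWithinAt) hf.continuousWithinAt hf'
    (hL.congr' hderiv.symm)
  exact (uniqueDiffWithinAt_Ioi a).eq_deriv _ hd (hL'.mono Ioi_subset_Ici_self)

lemma not_continuousWithinAt_of_inv_sq_le_deriv {f f' : ℝ → ℝ} {D : ℝ} (hD : 0 < D)
    (hf : ∀ᶠ r in 𝓝[>] 0, HasDerivAt f (f' r) r ∧ D / r ^ 2 ≤ f' r) :
    ¬ ContinuousWithinAt f (Ioi 0) 0 := by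
  intro hcont
  obtain ⟨b, hb : 0 < b, hsub⟩ := mem_nhdsGT_iff_exists_Ioo_subset.1 hf
  have hmono : MonotoneOn (fun r => f r + D * r⁻¹) (Ioo 0 b) := by
    refine monotoneOn_of_hasDerivWithinAt_nonneg (convex_Ioo 0 b)
      (f' := fun r => f' r + D * -(r ^ 2)⁻¹) (fun r hr => ?_) (fun r hr => ?_) (fun r hr => ?_)
    · exact ((hsub hr).1.add ((hasDerivAt_inv hr.1.ne').const_mul D)).continuousAt
        |>.continuousWithinAt
    · rw [interior_Ioo] at hr ⊢
      exact ((hsub hr).1.add ((hasDerivAt_inv hr.1.ne').const_mul D)).hasDerivWithinAt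
    · rw [interior_Ioo] at hr
      have := (hsub hr).2
      rw [div_eq_mul_inv] at this
      linarith
  have hm : b / 2 ∈ Ioo 0 b := ⟨by linarith, by linarith⟩
  have hbound : ∀ᶠ r in 𝓝[>] 0, D * r⁻¹ ≤ f (b / 2) + D * (b / 2)⁻¹ - f r := by
    filter_upwards [Ioo_mem_nhdsGT (half_pos hb)] with r hr
    have := hmono ⟨hr.1, hr.2.trans hm.2⟩ hm hr.2.le
    simp only at this
    linarith
  exact not_tendsto_atTop_of_tendsto_nhds (tendsto_const_nhds.sub hcont)
    (tendsto_atTop_mono' _ hbound (tendsto_inv_nhdsGT_zero.const_mul_atTop hD))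

lemma eq_zero_of_tendsto_mul_deriv {f f' g : ℝ → ℝ} {C c : ℝ}
    (hf : ContinuousWithinAt f (Ioi 0) 0) (hf' : ∀ᶠ r in 𝓝[>] 0, HasDerivAt f (f' r) r)
    (hg : ∀ᶠ r in 𝓝[>] 0, 0 < g r ∧ g r ≤ C * r ^ 2)
    (hlim : Tendsto (fun r => g r * f' r) (𝓝[>] 0) (𝓝 c)) : c = 0 := by
  have hC : 0 < C := by
    obtain ⟨r, ⟨hgr, hgC⟩, hr : 0 < r⟩ := (hg.and self_mem_nhdsWithin).exists
    exact pos_of_mul_pos_left (hgr.trans_le hgC) (by positivity)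
  have key : ∀ (φ φ' : ℝ → ℝ) (e : ℝ), 0 < e → ContinuousWithinAt φ (Ioi 0) 0 →
      (∀ᶠ r in 𝓝[>] 0, HasDerivAt φ (φ' r) r) →
      Tendsto (fun r => g r * φ' r) (𝓝[>] 0) (𝓝 e) → False := by
    intro φ φ' e he hφ hφ' hlim
    refine not_continuousWithinAt_of_inv_sq_le_deriv (f' := φ')
      (div_pos he (mul_pos two_pos hC)) ?_ hφ
    filter_upwards [hφ', hg, hlim.eventually (lt_mem_nhds (half_lt_self he)),
      self_mem_nhdsWithin] with r hφr ⟨hgr, hgC⟩ he2 (hr : 0 < r)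
    refine ⟨hφr, ?_⟩
    rw [div_div, div_le_iff₀ (by positivity)]
    nlinarith
  by_contra hc
  rcases lt_or_gt_of_ne hc with hneg | hpos
  · refine key (-f) (-f') (-c) (neg_pos.2 hneg) hf.neg (hf'.mono fun r hr => hr.neg) ?_
    simpa only [Pi.neg_apply, mul_neg] using hlim.neg
  · exact key f f' c hpos hf hf' hlim

/-- `r (ψ' v - ψ v')` for `v = -u'`; when `(r u')' = -r q u`, one has `v' = u' / r + q u`. -/
def radialWronskian (q : ℝ) (u u' ψ ψ' : ℝ → ℝ) (r : ℝ) : ℝ :=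
  r * ψ' r * -u' r - ψ r * (u' r + r * q * u r)

section Wronskian

variable {q t : ℝ} {u u' ψ ψ' : ℝ → ℝ}

lemma hasDerivAt_radialWronskian (ht : t ≠ 0) (hu : HasDerivAt u (u' t) t)
    (hψ : HasDerivAt ψ (ψ' t) t) (hru : HasDerivAt (fun s => s * u' s) (-(t * (q * u t))) t)
    (hrψ : HasDerivAt (fun s => s * ψ' s) (-(t * ((q - 1 / t ^ 2) * ψ t))) t) :
    HasDerivAt (radialWronskian q u u' ψ ψ') 0 t := by
  have hu' := hasDerivAt_of_hasDerivAt_id_mul ht hru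
  have hW := (hrψ.mul hu'.neg).sub (hψ.mul (hu'.add (((hasDerivAt_id t).mul_const q).mul hu)))
  refine hW.congr_deriv ?_
  simp only [Pi.add_apply, Pi.mul_apply, Pi.neg_apply, id]
  field_simp
  ring

lemma hasDerivAt_div_neg (ht : t ≠ 0) (hu't : u' t ≠ 0) (hψ : HasDerivAt ψ (ψ' t) t)
    (hru : HasDerivAt (fun s => s * u' s) (-(t * (q * u t))) t) :
    HasDerivAt (fun s => ψ s / -u' s) (radialWronskian q u u' ψ ψ' t / (t * u' t ^ 2)) t := by
  refine (hψ.div (hasDerivAt_of_hasDerivAt_id_mul ht hru).neg (neg_ne_zero.2 hu't)).congr_deriv ?_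
  simp only [radialWronskian, Pi.neg_apply]
  field_simp
  ring

lemma tendsto_of_radialWronskian_eq {l : Filter ℝ} {a c : ℝ} (hl : l ≤ 𝓝 a)
    (hW : ∀ᶠ r in l, radialWronskian q u u' ψ ψ' r = c) (hψ : ContinuousAt ψ a)
    (hu' : ContinuousAt u' a) (hu : ContinuousAt u a) (ha : a * -u' a ≠ 0) :
    Tendsto ψ' l (𝓝 ((c + ψ a * (u' a + a * q * u a)) / (a * -u' a))) := by
  have hcont : ContinuousAt (fun r => (c + ψ r * (u' r + r * q * u r)) / (r * -u' r)) a :=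
    ContinuousAt.div (by fun_prop) (by fun_prop) ha
  refine (hcont.tendsto.mono_left hl).congr' ?_
  filter_upwards [hW, hl ((continuousAt_id.mul hu'.neg).eventually_ne ha)]
    with r hr (hr0 : r * -u' r ≠ 0)
  rw [← hr, radialWronskian, div_eq_iff hr0]
  ring

end Wronskian

namespace EigenProfile

variable {R rs lam : ℝ} {u u' : ℝ → ℝ}

lemma hasDerivAt (hu : EigenProfile R rs lam u u') {t : ℝ} (ht : t ∈ Ioo 0 R) :
    HasDerivAt u (u' t) t :=
  (hu.deriv t (Ioo_subset_Icc_self ht)).hasDerivAt (Icc_mem_nhds ht.1 ht.2)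

lemma exists_neg_deriv_le_mul (hu : EigenProfile R rs lam u u') (hrsR : rs ≤ R) :
    ∃ C, ∀ r ∈ Ioo 0 rs, -u' r ≤ C * r := by
  obtain ⟨M, hM⟩ := isCompact_Icc.exists_bound_of_continuousOn hu.cont
  refine ⟨|lam + 1| * M, fun r hr => ?_⟩
  have hrR : r < R := hr.2.trans_le hrsR
  obtain ⟨c, hc, hslope⟩ := exists_hasDerivAt_eq_slope (fun s => s * u' s)
    (fun s => -(s * ((lam + 1) * u s))) hr.1
    (continuousOn_id.mul (hu.derivCont.mono (Icc_subset_Icc le_rfl hrR.le)))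
    (fun s hs => by
      simpa only [if_pos (hs.2.trans hr.2)] using
        hu.ode s ⟨hs.1, hs.2.trans hrR⟩ (hs.2.trans hr.2).ne)
  have huc : |u c| ≤ M := by
    simpa only [Real.norm_eq_abs] using hM c ⟨hc.1.le, hc.2.le.trans hrR.le⟩
  rw [zero_mul, sub_zero, sub_zero, mul_div_cancel_left₀ _ hr.1.ne'] at hslope
  calc -u' r = c * ((lam + 1) * u c) := by rw [← hslope, neg_neg]
    _ ≤ |c * ((lam + 1) * u c)| := le_abs_self _
    _ = c * (|lam + 1| * |u c|) := by rw [abs_mul, abs_mul, abs_of_pos hc.1]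
    _ ≤ r * (|lam + 1| * M) :=
        mul_le_mul hc.2.le (mul_le_mul_of_nonneg_left huc (abs_nonneg _)) (by positivity) hr.1.le
    _ = |lam + 1| * M * r := by ring

end EigenProfile

namespace PsiProfile

variable {R rs lam dplus dminus : ℝ} {u u' ψ ψ' : ℝ → ℝ}

lemma hasDerivAt_radialWronskian (hψ : PsiProfile R rs lam u 1 ψ ψ' dplus dminus)
    (hu : EigenProfile R rs lam u u') {t : ℝ} (ht : t ∈ Ioo 0 R) (hts : t ≠ rs) :
    HasDerivAt (radialWronskian (lam + if t < rs then 1 else 0) u u' ψ ψ') 0 t :=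
  _root_.hasDerivAt_radialWronskian ht.1.ne' (hu.hasDerivAt ht) (hψ.deriv t ht hts)
    (hu.ode t ht hts) (by simpa only [Nat.cast_one, one_pow] using hψ.ode t ht hts)

lemma hasDerivAt_div (hψ : PsiProfile R rs lam u 1 ψ ψ' dplus dminus)
    (hu : EigenProfile R rs lam u u') {t : ℝ} (ht : t ∈ Ioo 0 R) (hts : t ≠ rs) :
    HasDerivAt (fun s => ψ s / -u' s)
      (radialWronskian (lam + if t < rs then 1 else 0) u u' ψ ψ' t / (t * u' t ^ 2)) t :=
  hasDerivAt_div_neg ht.1.ne' (hu.derivNeg t (Ioo_subset_Ioc_self ht)).ne (hψ.deriv t ht hts)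
    (hu.ode t ht hts)

lemma continuousOn_div (hψ : PsiProfile R rs lam u 1 ψ ψ' dplus dminus)
    (hu : EigenProfile R rs lam u u') : ContinuousOn (fun s => ψ s / -u' s) (Ioc 0 R) :=
  (hψ.cont.mono Ioc_subset_Icc_self).div (hu.derivCont.mono Ioc_subset_Icc_self).neg
    fun t ht => (neg_pos.2 (hu.derivNeg t ht)).ne'

lemma radialWronskian_eq_zero_of_lt (hψ : PsiProfile R rs lam u 1 ψ ψ' dplus dminus)
    (hu : EigenProfile R rs lam u u') (hrs : 0 < rs) (hrsR : rs < R) :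
    ∀ t ∈ Ioo 0 rs, radialWronskian (lam + 1) u u' ψ ψ' t = 0 := by
  obtain ⟨c, hc⟩ := exists_const_of_hasDerivAt_zero_Ioo fun t (ht : t ∈ Ioo 0 rs) => by
    simpa only [if_pos ht.2] using
      hψ.hasDerivAt_radialWronskian hu ⟨ht.1, ht.2.trans hrsR⟩ ht.2.ne
  suffices c = 0 from fun t ht => (hc t ht).trans this
  have hR : 0 < R := hrs.trans hrsR
  have hnhds : Icc 0 R ∈ 𝓝[>] (0 : ℝ) := Icc_mem_nhdsGT hR
  have hψ0 := hψ.cont 0 ⟨le_rfl, hR.le⟩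
  have hu'0 := hu.derivCont 0 ⟨le_rfl, hR.le⟩
  have hu0 := hu.cont 0 ⟨le_rfl, hR.le⟩
  have hcont : ContinuousWithinAt (fun r => c + ψ r * (u' r + r * (lam + 1) * u r))
      (Icc 0 R) 0 := by fun_prop
  obtain ⟨C, hC⟩ := hu.exists_neg_deriv_le_mul hrsR.le
  refine eq_zero_of_tendsto_mul_deriv (f' := ψ') (g := fun r => r * -u' r) (C := C)
    (hψ0.mono_of_mem_nhdsWithin hnhds) ?_ ?_ ?_
  · filter_upwards [Ioo_mem_nhdsGT hrs] with r hr
    exact hψ.deriv r ⟨hr.1, hr.2.trans hrsR⟩ hr.2.ne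
  · filter_upwards [Ioo_mem_nhdsGT hrs] with r hr
    refine ⟨mul_pos hr.1 (neg_pos.2 (hu.derivNeg r ⟨hr.1, (hr.2.trans hrsR).le⟩)), ?_⟩
    nlinarith [hC r hr, hr.1]
  · have hlim := (hcont.mono_of_mem_nhdsWithin hnhds).tendsto
    simp only [hψ.val0, zero_mul, add_zero] at hlim
    refine hlim.congr' ?_
    filter_upwards [Ioo_mem_nhdsGT hrs] with r hr
    rw [← hc r hr, radialWronskian]
    ring

lemma radialWronskian_eq_of_gt (hψ : PsiProfile R rs lam u 1 ψ ψ' dplus dminus)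
    (hu : EigenProfile R rs lam u u') (hrs : 0 < rs) (hrsR : rs < R) :
    ∀ t ∈ Ioo rs R, radialWronskian lam u u' ψ ψ' t = rs * u rs * (ψ rs + u' rs) := by
  obtain ⟨c, hc⟩ := exists_const_of_hasDerivAt_zero_Ioo fun t (ht : t ∈ Ioo rs R) => by
    simpa only [if_neg (not_lt.2 ht.1.le), add_zero] using
      hψ.hasDerivAt_radialWronskian hu ⟨hrs.trans ht.1, ht.2⟩ ht.1.ne'
  have hnhds : Icc 0 R ∈ 𝓝 rs := Icc_mem_nhds hrs hrsR
  have hψc := hψ.cont.continuousAt hnhds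
  have hu'c := hu.derivCont.continuousAt hnhds
  have huc := (hu.hasDerivAt ⟨hrs, hrsR⟩).continuousAt
  have hne : rs * -u' rs ≠ 0 := (mul_pos hrs (neg_pos.2 (hu.derivNeg rs ⟨hrs, hrsR.le⟩))).ne'
  have hminus := eq_of_hasDerivWithinAt_Iio_of_tendsto_deriv hψ.jumpMinus hψc
    (by filter_upwards [Ioo_mem_nhdsLT hrs] with r hr
        exact hψ.deriv r ⟨hr.1, hr.2.trans hrsR⟩ hr.2.ne)
    (tendsto_of_radialWronskian_eq nhdsWithin_le_nhds
      (by filter_upwards [Ioo_mem_nhdsLT hrs] with r hr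
          exact hψ.radialWronskian_eq_zero_of_lt hu hrs hrsR r hr) hψc hu'c huc hne)
  have hplus := eq_of_hasDerivWithinAt_Ioi_of_tendsto_deriv hψ.jumpPlus hψc
    (by filter_upwards [Ioo_mem_nhdsGT hrsR] with r hr
        exact hψ.deriv r ⟨hrs.trans hr.1, hr.2⟩ hr.1.ne')
    (tendsto_of_radialWronskian_eq nhdsWithin_le_nhds
      (by filter_upwards [Ioo_mem_nhdsGT hrsR] with r hr
          exact hc r hr) hψc hu'c huc hne)
  have hjump := hψ.jump
  rw [hminus, hplus, div_sub_div_same, div_eq_iff hne] at hjump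
  intro t ht
  rw [hc t ht]
  linear_combination hjump

lemma div_eq_of_mem_Ioc (hψ : PsiProfile R rs lam u 1 ψ ψ' dplus dminus)
    (hu : EigenProfile R rs lam u u') (hrs : 0 < rs) (hrsR : rs < R) :
    ∀ t ∈ Ioc 0 rs, ψ t / -u' t = ψ rs / -u' rs := by
  have hcont := (hψ.continuousOn_div hu).mono (Ioc_subset_Ioc_right hrsR.le)
  have hderiv : ∀ t ∈ interior (Ioc 0 rs),
      HasDerivWithinAt (fun s => ψ s / -u' s) 0 (interior (Ioc 0 rs)) t := by
    rw [interior_Ioc]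
    intro t ht
    have h := hψ.hasDerivAt_div hu ⟨ht.1, ht.2.trans hrsR⟩ ht.2.ne
    rw [if_pos ht.2, hψ.radialWronskian_eq_zero_of_lt hu hrs hrsR t ht, zero_div] at h
    exact h.hasDerivWithinAt
  intro t ht
  have hrs_mem : rs ∈ Ioc 0 rs := right_mem_Ioc.2 hrs
  exact le_antisymm
    (monotoneOn_of_hasDerivWithinAt_nonneg (convex_Ioc 0 rs) hcont hderiv (fun _ _ => le_rfl)
      ht hrs_mem ht.2)
    (antitoneOn_of_hasDerivWithinAt_nonpos (convex_Ioc 0 rs) hcont hderiv (fun _ _ => le_rfl)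
      ht hrs_mem ht.2)

lemma strictAntiOn_div (hψ : PsiProfile R rs lam u 1 ψ ψ' dplus dminus)
    (hu : EigenProfile R rs lam u u') (hrs : 0 < rs) (hrsR : rs < R) :
    StrictAntiOn (fun s => ψ s / -u' s) (Icc rs R) := by
  have hK : 0 < rs * u rs := mul_pos hrs (hu.pos rs ⟨hrs.le, hrsR⟩)
  have hcont := (hψ.continuousOn_div hu).mono (Icc_subset_Ioc_iff hrsR.le |>.2 ⟨hrs, le_rfl⟩)
  have hderiv : ∀ t ∈ interior (Icc rs R), HasDerivWithinAt (fun s => ψ s / -u' s)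
      (rs * u rs * (ψ rs + u' rs) / (t * u' t ^ 2)) (interior (Icc rs R)) t := by
    rw [interior_Icc]
    intro t ht
    have h := hψ.hasDerivAt_div hu ⟨hrs.trans ht.1, ht.2⟩ ht.1.ne'
    rw [if_neg (not_lt.2 ht.1.le), add_zero, hψ.radialWronskian_eq_of_gt hu hrs hrsR t ht] at h
    exact h.hasDerivWithinAt
  have hden : ∀ t ∈ interior (Icc rs R), 0 < t * u' t ^ 2 := by
    rw [interior_Icc]
    intro t ht
    exact mul_pos (hrs.trans ht.1) (sq_pos_of_neg (hu.derivNeg t ⟨hrs.trans ht.1, ht.2.le⟩))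
  have hsign : ψ rs + u' rs < 0 := by
    by_contra! h
    have hle := monotoneOn_of_hasDerivWithinAt_nonneg (convex_Icc rs R) hcont hderiv
      (fun t ht => div_nonneg (mul_nonneg hK.le h) (hden t ht).le)
      (left_mem_Icc.2 hrsR.le) (right_mem_Icc.2 hrsR.le) hrsR.le
    have hv : 0 < -u' rs := neg_pos.2 (hu.derivNeg rs ⟨hrs, hrsR.le⟩)
    simp only [hψ.valR, zero_div, div_nonpos_iff] at hle
    rcases hle with ⟨_, _⟩ | ⟨_, _⟩ <;> linarith
  exact strictAntiOn_of_hasDerivWithinAt_neg (convex_Icc rs R) hcont hderiv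
    fun t ht => div_neg_of_neg_of_pos (mul_neg_of_pos_of_neg hK hsign) (hden t ht)

end PsiProfile

theorem psi_one_pos_general
    (R rs lam : ℝ) (hrs : 0 < rs) (hrsR : rs < R)
    (u u' : ℝ → ℝ) (hu : EigenProfile R rs lam u u')
    (ψ ψ' : ℝ → ℝ) (dplus dminus : ℝ)
    (hψ : PsiProfile R rs lam u 1 ψ ψ' dplus dminus) :
    ∀ r ∈ Ioo (0 : ℝ) R, 0 < ψ r := by
  have hpos : ∀ t ∈ Ico rs R, 0 < ψ t / -u' t := fun t ht => by
    simpa only [hψ.valR, zero_div] using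
      hψ.strictAntiOn_div hu hrs hrsR ⟨ht.1, ht.2.le⟩ (right_mem_Icc.2 hrsR.le) ht.2
  intro r hr
  refine (div_pos_iff_of_pos_right (neg_pos.2 (hu.derivNeg r (Ioo_subset_Ioc_self hr)))).1 ?_
  rcases le_or_gt r rs with h | h
  · rw [hψ.div_eq_of_mem_Ioc hu hrs hrsR r ⟨hr.1, h⟩]
    exact hpos rs ⟨le_rfl, hrsR⟩
  · exact hpos r ⟨h.le, hr.2⟩

/-- the function `ψ₁` is strictly positive on `(0,R)`. -/
theorem psi_one_pos
    (R rs lam : ℝ) (hR : 0 < R) (hrs : 0 < rs) (hrsR : rs < R)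
    (u u' : ℝ → ℝ) (hu : EigenProfile R rs lam u u')
    (ψ ψ' : ℝ → ℝ) (dplus dminus : ℝ)
    (hψ : PsiProfile R rs lam u 1 ψ ψ' dplus dminus) :
    ∀ r ∈ Ioo (0 : ℝ) R, 0 < ψ r :=
  psi_one_pos_general R rs lam hrs hrsR u u' hu ψ ψ' dplus dminus hψ

end
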